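/- Suppose T_1, T_2 are affine maps of ℝ² with T_1(x,y) = (-13x/27 + 13/27, 7y/9 + 2/9) and T_2(x,y) = (13y/27 + 14/27, 7x/9). If (x_1,y_1), (x_2,y_2) ∈ [0,1]² have all coordinates in ℤ[1/3], then the first coordinates of T_1(x_1,y_1) and T_2(x_2,y_2) differ, and the second coordinates of T_1(x_1,y_1) and T_2(x_2,y_2) differ. -/

import Mathlib

open Filter Topology

noncomputable def opNorm {n : Type*} [Fintype n] [DecidableEq n] (A : Matrix n n ℝ) : ℝ :=
  ‖Matrix.toEuclideanCLM (𝕜 := ℝ) A‖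

noncomputable def specRad {n : Type*} [Fintype n] [DecidableEq n] (B : Matrix n n ℝ) : ℝ :=
  sSup {r : ℝ | ∃ μ ∈ spectrum ℂ (B.map (fun x => (x : ℂ))), r = ‖μ‖}

noncomputable def singularValues {d : ℕ} (A : Matrix (Fin d) (Fin d) ℝ) : Fin d → ℝ :=
  fun i => Real.sqrt ((show (Matrix.transpose A * A).IsHermitian by
      simpa [Matrix.conjTranspose_eq_transpose_of_trivial] using Matrix.isHermitian_conjTranspose_mul_self A).eigenvalues
    (Tuple.sort (fun j => -((show (Matrix.transpose A * A).IsHermitian by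
      simpa [Matrix.conjTranspose_eq_transpose_of_trivial] using Matrix.isHermitian_conjTranspose_mul_self A).eigenvalues j)) i))

noncomputable def svf {d : ℕ} (A : Matrix (Fin d) (Fin d) ℝ) (s : ℝ) : ℝ :=
  if s < d then
    ∏ i : Fin d,
      if (i : ℤ) < ⌊s⌋ then singularValues A i
      else if (i : ℤ) = ⌊s⌋ then singularValues A i ^ (s - (⌊s⌋ : ℝ)) else 1
  else |A.det| ^ (s / d)

def IsGenPerm {n : Type*} [Fintype n] (A : Matrix n n ℝ) : Prop :=
  (∀ i, ∃! j, A i j ≠ 0) ∧ (∀ j, ∃! i, A i j ≠ 0)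

abbrev SIdx (d k : ℕ) := {p : Finset (Fin d) × Fin d // p.1.card = k ∧ p.2 ∉ p.1}

noncomputable def Pmat {d : ℕ} (s : ℝ) (k : ℕ) (π : Equiv.Perm (Fin d)) (a : Fin d → ℝ) :
    Matrix (SIdx d k) (SIdx d k) ℝ :=
  fun q p =>
    if q.1.1 = p.1.1.image π ∧ q.1.2 = π p.1.2 then
      (∏ j ∈ p.1.1, |a j|) * |a p.1.2| ^ (s - (k : ℝ))
    else 0

noncomputable def pressure {d N : ℕ} (A : Fin N → Matrix (Fin d) (Fin d) ℝ) (s : ℝ) : ℝ :=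
  ⨅ n : ℕ, (1 / ((n : ℝ) + 1)) *
    Real.log (∑ f : Fin (n + 1) → Fin N, svf ((List.ofFn fun m => A (f m)).prod) s)

def Z13 : Set ℝ := {x | ∃ (p : ℤ) (n : ℕ), x = (p : ℝ) / 3 ^ n}

theorem sub_mem_Z13 {x y : ℝ} (hx : x ∈ Z13) (hy : y ∈ Z13) : x - y ∈ Z13 := by
  obtain ⟨p, n, rfl⟩ := hx
  obtain ⟨q, m, rfl⟩ := hy
  refine ⟨p * 3 ^ m - q * 3 ^ n, n + m, ?_⟩
  push_cast
  field_simp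
  ring

theorem int_div_prime_notMem_Z13 {q : ℕ} (hq : q.Prime) (hq3 : q ≠ 3) {a : ℤ}
    (ha : ¬ (q : ℤ) ∣ a) : (a / q : ℝ) ∉ Z13 := by
  rintro ⟨p, n, h⟩
  have hq' : Prime (q : ℤ) := Nat.prime_iff_prime_int.mp hq
  have hcross : a * 3 ^ n = q * p := by
    have : (q : ℝ) ≠ 0 := by exact_mod_cast hq.ne_zero
    field_simp at h
    exact_mod_cast h
  rcases hq'.dvd_or_dvd ⟨p, hcross⟩ with hqa | hq3n
  · exact ha hqa
  · have : q ∣ 3 := Int.natCast_dvd_natCast.mp (hq'.dvd_of_dvd_pow hq3n)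
    exact hq3 ((Nat.prime_dvd_prime_iff_eq hq Nat.prime_three).mp this)

theorem stmt18_general (x₁ y₁ x₂ y₂ : ℝ)
    (hx₁ : x₁ ∈ Set.Icc (0 : ℝ) 1) (hy₂ : y₂ ∈ Set.Icc (0 : ℝ) 1)
    (hy₁' : y₁ ∈ Z13) (hx₂' : x₂ ∈ Z13) :
    (-13 / 27 * x₁ + 13 / 27 ≠ 13 / 27 * y₂ + 14 / 27) ∧
      (7 / 9 * y₁ + 2 / 9 ≠ 7 / 9 * x₂) := by
  constructor
  · intro h
    linarith [hx₁.1, hy₂.1]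
  · intro h
    have hdiff : x₂ - y₁ = ((2 : ℤ) / (7 : ℕ) : ℝ) := by push_cast; linarith
    exact int_div_prime_notMem_Z13 (by norm_num) (by norm_num) (by norm_num)
      (hdiff ▸ sub_mem_Z13 hx₂' hy₁')

theorem stmt18 (x₁ y₁ x₂ y₂ : ℝ)
    (hx₁ : x₁ ∈ Set.Icc (0 : ℝ) 1) (hy₁ : y₁ ∈ Set.Icc (0 : ℝ) 1)
    (hx₂ : x₂ ∈ Set.Icc (0 : ℝ) 1) (hy₂ : y₂ ∈ Set.Icc (0 : ℝ) 1)
    (hx₁' : x₁ ∈ Z13) (hy₁' : y₁ ∈ Z13) (hx₂' : x₂ ∈ Z13) (hy₂' : y₂ ∈ Z13) :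
    (-13 / 27 * x₁ + 13 / 27 ≠ 13 / 27 * y₂ + 14 / 27) ∧
      (7 / 9 * y₁ + 2 / 9 ≠ 7 / 9 * x₂) :=
  stmt18_general x₁ y₁ x₂ y₂ hx₁ hy₂ hy₁' hx₂'
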